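/- arXiv:1205.3269 — 2 statements merged into one kernel-verified Lean document; each statement's English description precedes it below -/
import Mathlib

section
/- With quadratic coupling operators hₖ = (Mₖ + Xᵀ Rₖ/2)X and dispersion columns gₖ = Θ(Mₖᵀ + Rₖ X), the commutator i[hⱼ, gₖ] equals Θ Rₖ Θ (Mⱼᵀ + Rⱼ X); in particular each entry of i[hⱼ, gₖ] is an affine (degree ≤ 1) function of X. -/
/-!
Bracketing with a fixed element is a derivation, so the CCRs give
`i[X_p X_q, X_t] = -(Θ_{qt} X_p + Θ_{pt} X_q)`. With `R` symmetric and `Θ` antisymmetric this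
turns into `i[h, X_t] = (Θ (Mᵀ + R X))_t`. Since `gₖ = Θ (Mₖᵀ + Rₖ X)` is affine in `X` and scalars
are central, `i[hⱼ, gₖ] = Θ Rₖ i[hⱼ, X] = Θ Rₖ Θ (Mⱼᵀ + Rⱼ X)`.
-/

attribute [local instance] LieRing.ofAssociativeRing

open Finset

theorem Ring.mul_lie {A : Type*} [Ring A] (a b c : A) : ⁅a * b, c⁆ = a * ⁅b, c⁆ + ⁅a, c⁆ * b := by
  simp only [Ring.lie_def]; noncomm_ring

theorem Ring.lie_one {A : Type*} [Ring A] (a : A) : ⁅a, (1 : A)⁆ = 0 := by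
  simp only [Ring.lie_def, mul_one, one_mul, sub_self]

theorem sum_smul_sum_smul_eq_mul_apply {ι κ ν M : Type*} [Fintype κ] [Fintype ν]
    [AddCommMonoid M] [Module ℂ M] (P : Matrix ι κ ℝ) (Q : Matrix κ ν ℝ) (w : ν → M) (i : ι) :
    ∑ k, (P i k : ℂ) • ∑ l, (Q k l : ℂ) • w l = ∑ l, ((P * Q) i l : ℂ) • w l := by
  simp only [Matrix.mul_apply, Complex.ofReal_sum, Complex.ofReal_mul, smul_sum, smul_smul,
    sum_smul]
  exact sum_comm

section CanonicalCommutation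

variable {A : Type*} [Ring A] [Algebra ℂ A] {ι : Type*}

def SatisfiesCCR (X : ι → A) (Θ : Matrix ι ι ℝ) : Prop :=
  ∀ p q, ⁅X p, X q⁆ = Complex.I • ((Θ p q : ℂ) • (1 : A))

theorem lie_mul_of_satisfiesCCR {X : ι → A} {Θ : Matrix ι ι ℝ} (hccr : SatisfiesCCR X Θ)
    (p q t : ι) :
    ⁅X p * X q, X t⁆ = Complex.I • ((Θ q t : ℂ) • X p + (Θ p t : ℂ) • X q) := by
  rw [Ring.mul_lie, hccr, hccr]
  simp only [mul_smul_comm, smul_mul_assoc, mul_one, one_mul, smul_add]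

variable [Fintype ι]

/-- In matrix notation `quadraticOp a S X = (aᵀ + Xᵀ S / 2) X` and `gradientOp a S X = a + S X`. -/
noncomputable def quadraticOp (a : ι → ℝ) (S : Matrix ι ι ℝ) (X : ι → A) : A :=
  ∑ p, (a p : ℂ) • X p + ((1 : ℂ) / 2) • ∑ p, ∑ q, (S p q : ℂ) • (X p * X q)

def gradientOp (a : ι → ℝ) (S : Matrix ι ι ℝ) (X : ι → A) (u : ι) : A :=
  (a u : ℂ) • (1 : A) + ∑ p, (S u p : ℂ) • X p

theorem lie_gradientOp (b : A) (a : ι → ℝ) (S : Matrix ι ι ℝ) (X : ι → A) (u : ι) :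
    ⁅b, gradientOp a S X u⁆ = ∑ p, (S u p : ℂ) • ⁅b, X p⁆ := by
  simp only [gradientOp, lie_add, lie_smul, Ring.lie_one, smul_zero, zero_add, lie_sum]

theorem sum_smul_lie_mul_of_satisfiesCCR {X : ι → A} {Θ : Matrix ι ι ℝ}
    (hccr : SatisfiesCCR X Θ) {S : Matrix ι ι ℝ} (hS : S.transpose = S) (t : ι) :
    ∑ p, ∑ q, (S p q : ℂ) • ⁅X p * X q, X t⁆
      = (2 * Complex.I) • ∑ p, ∑ q, (S p q * Θ q t : ℂ) • X p := by
  have hswap : ∑ p, ∑ q, (S p q * Θ p t : ℂ) • X q = ∑ p, ∑ q, (S p q * Θ q t : ℂ) • X p := by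
    rw [sum_comm]
    refine sum_congr rfl fun p _ => sum_congr rfl fun q _ => ?_
    rw [← Matrix.transpose_apply S p q, hS]
  calc ∑ p, ∑ q, (S p q : ℂ) • ⁅X p * X q, X t⁆
      = Complex.I • (∑ p, ∑ q, (S p q * Θ q t : ℂ) • X p
          + ∑ p, ∑ q, (S p q * Θ p t : ℂ) • X q) := by
        simp only [lie_mul_of_satisfiesCCR hccr, smul_add, smul_sum, sum_add_distrib, smul_smul,
          mul_comm Complex.I, mul_assoc]
    _ = (2 * Complex.I) • ∑ p, ∑ q, (S p q * Θ q t : ℂ) • X p := by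
        rw [hswap, ← two_smul ℂ, smul_smul, mul_comm]

theorem I_smul_lie_quadraticOp {X : ι → A} {Θ : Matrix ι ι ℝ} (hccr : SatisfiesCCR X Θ)
    (hΘ : Θ.transpose = -Θ) {S : Matrix ι ι ℝ} (hS : S.transpose = S) (a : ι → ℝ) (t : ι) :
    Complex.I • ⁅quadraticOp a S X, X t⁆ = ∑ u, (Θ t u : ℂ) • gradientOp a S X u := by
  have hΘ' (p q : ι) : (Θ p q : ℂ) = -Θ q p := by
    rw [← Matrix.transpose_apply Θ q p, hΘ]; simp
  have hS' (p q : ι) : (S p q : ℂ) = S q p := by rw [← Matrix.transpose_apply S q p, hS]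
  calc Complex.I • ⁅quadraticOp a S X, X t⁆
      = ∑ u, (Θ t u * a u : ℂ) • (1 : A) + ∑ u, ∑ p, (Θ t u * S u p : ℂ) • X p := by
        simp only [quadraticOp, add_lie, smul_lie, sum_lie, hccr _ t,
          sum_smul_lie_mul_of_satisfiesCCR hccr hS]
        simp only [smul_add, smul_sum, smul_smul]
        rw [sum_comm (γ := ι) (f := fun u p => (Θ t u * S u p : ℂ) • X p)]
        congr 1
        · refine sum_congr rfl fun p _ => ?_
          rw [hΘ' p t]
          congr 1
          linear_combination (-(a p * Θ t p : ℂ)) * Complex.I_mul_I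
        · refine sum_congr rfl fun p _ => sum_congr rfl fun q _ => ?_
          rw [hS' p q, hΘ' q t]
          congr 1
          linear_combination (-(S q p * Θ t q : ℂ)) * Complex.I_mul_I
    _ = ∑ u, (Θ t u : ℂ) • gradientOp a S X u := by
        simp only [gradientOp, smul_add, smul_sum, smul_smul, sum_add_distrib]

end CanonicalCommutation

theorem coupling_dispersion_commutator {A : Type*} [Ring A] [Algebra ℂ A]
    {n m : ℕ} (X : Fin n → A) (Θ : Matrix (Fin n) (Fin n) ℝ)
    (hΘ : Θ.transpose = -Θ)
    (hccr : ∀ p q, X p * X q - X q * X p = Complex.I • ((Θ p q : ℂ) • (1 : A)))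
    (M : Matrix (Fin m) (Fin n) ℝ)
    (R : Fin m → Matrix (Fin n) (Fin n) ℝ) (hR : ∀ k, (R k).transpose = R k)
    (h : Fin m → A)
    (hdef : ∀ j, h j = ∑ p, (M j p : ℂ) • X p
      + ((1 : ℂ)/2) • ∑ p, ∑ q, (R j p q : ℂ) • (X p * X q))
    (g : Fin m → Fin n → A)
    (hg : ∀ k ℓ, g k ℓ =
      ∑ s, (Θ ℓ s : ℂ) • ((M k s : ℂ) • (1 : A) + ∑ p, (R k s p : ℂ) • X p)) :
    ∀ j k ℓ, Complex.I • (h j * g k ℓ - g k ℓ * h j) =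
      ∑ u, ((Θ * R k * Θ) ℓ u : ℂ) •
        ((M j u : ℂ) • (1 : A) + ∑ p, (R j u p : ℂ) • X p) := by
  intro j k ℓ
  have hh : h j = quadraticOp (M j) (R j) X := hdef j
  have hgk : g k ℓ = ∑ s, (Θ ℓ s : ℂ) • gradientOp (M k) (R k) X s := hg k ℓ
  change Complex.I • ⁅h j, g k ℓ⁆ = ∑ u, ((Θ * R k * Θ) ℓ u : ℂ) • gradientOp (M j) (R j) X u
  calc Complex.I • ⁅h j, g k ℓ⁆
      = ∑ s, (Θ ℓ s : ℂ) • ∑ p, (R k s p : ℂ) • Complex.I • ⁅quadraticOp (M j) (R j) X, X p⁆ := by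
        simp only [hh, hgk, lie_sum, lie_smul, lie_gradientOp, smul_sum, smul_comm Complex.I]
    _ = ∑ s, (Θ ℓ s : ℂ) • ∑ p, (R k s p : ℂ) • ∑ u, (Θ p u : ℂ) • gradientOp (M j) (R j) X u := by
        simp only [I_smul_lie_quadraticOp hccr hΘ (hR j)]
    _ = ∑ u, ((Θ * R k * Θ) ℓ u : ℂ) • gradientOp (M j) (R j) X u := by
        simp only [sum_smul_sum_smul_eq_mul_apply, Matrix.mul_assoc]
end

section
/- Let X satisfy CCRs [X,Xᵀ]=iΘ, let Y have columns Yₖ = RₖX with Rₖ real symmetric, M real m×n, J real antisymmetric m×m, and suppose the matrix YJM = ∑ₖ Φₖ Xₖ has all coefficient matrices Φₖ symmetric (equivalently YJM = −MᵀJYᵀ). Then for the cubic operator Δ := Xᵀ Y J M X, one has i[Δ, X] = 3 Θ Y J M X, i.e., for each component ℓ, i[Δ, X_ℓ] = 3 ∑ the ℓ-th entry of Θ Y J M X. -/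
/-!
Commuting with `X ℓ` is a derivation, and each `[X p, X ℓ]` is central, so the commutator of a
cubic monomial `X j X k X l` with `X ℓ` is a sum of three quadratic monomials. The coefficient
tensor `(j, k, l) ↦ Φ k j l` is totally symmetric (in `j, l` by the symmetry of `Φ k`, in `j, k`
by that of the `R p`), so after relabelling the three resulting sums coincide: hence the factor 3.
-/

open Finset

section CentralCommutators

variable {𝕜 A : Type*} [CommRing 𝕜] [Ring A] [Algebra 𝕜 A]

theorem mul_mul_mul_sub_of_commutators_central {x y z w : A} {a b c : 𝕜}
    (hx : x * w - w * x = a • 1) (hy : y * w - w * y = b • 1) (hz : z * w - w * z = c • 1) :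
    x * y * z * w - w * (x * y * z) = c • (x * y) + b • (x * z) + a • (y * z) := by
  have leibniz : x * y * z * w - w * (x * y * z)
      = x * y * (z * w - w * z) + x * ((y * w - w * y) * z) + (x * w - w * x) * (y * z) := by
    noncomm_ring
  rw [leibniz, hx, hy, hz]
  simp only [mul_smul_comm, smul_mul_assoc, mul_one, one_mul]

variable {ι : Type*} [Fintype ι]

theorem sum_symmetric_cubic_mul_sub {X : ι → A} {w : A} {c : ι → 𝕜}
    (hX : ∀ p, X p * w - w * X p = c p • 1) {T : ι → ι → ι → 𝕜}
    (hT₁₂ : ∀ j k l, T j k l = T k j l) (hT₁₃ : ∀ j k l, T j k l = T l k j) :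
    (∑ j, ∑ k, ∑ l, T j k l • (X j * X k * X l)) * w
        - w * ∑ j, ∑ k, ∑ l, T j k l • (X j * X k * X l)
      = (3 : 𝕜) • ∑ a, ∑ k, ∑ l, (c a * T a k l) • (X k * X l) := by
  set f : ι → ι → ι → A := fun a k l => (c a * T a k l) • (X k * X l)
  have term : ∀ j k l, T j k l • (X j * X k * X l * w - w * (X j * X k * X l))
      = f l j k + f k j l + f j k l := by
    intro j k l
    have hlj : T l j k = T j k l := by rw [hT₁₃, hT₁₂]
    rw [mul_mul_mul_sub_of_commutators_central (hX j) (hX k) (hX l)]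
    simp only [f, smul_add, smul_smul]
    rw [hlj, ← hT₁₂ j k l]
    simp only [mul_comm]
  have cycle : ∑ j, ∑ k, ∑ l, f l j k = ∑ a, ∑ k, ∑ l, f a k l :=
    (sum_congr rfl fun _ _ => sum_comm).trans sum_comm
  have swap : ∑ j, ∑ k, ∑ l, f k j l = ∑ a, ∑ k, ∑ l, f a k l := sum_comm
  calc _ = ∑ j, ∑ k, ∑ l, (f l j k + f k j l + f j k l) := by
        simp only [sum_mul, mul_sum, smul_mul_assoc, mul_smul_comm, ← sum_sub_distrib,
          ← smul_sub, term]
    _ = _ := by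
        simp only [sum_add_distrib]
        rw [cycle, swap]
        module

end CentralCommutators

theorem cubic_hamiltonian_commutator_general {A : Type*} [Ring A] [Algebra ℂ A]
    {n m : ℕ} (X : Fin n → A) (Θ : Matrix (Fin n) (Fin n) ℝ)
    (hccr : ∀ p q, X p * X q - X q * X p = Complex.I • ((Θ p q : ℂ) • (1 : A)))
    (R : Fin m → Matrix (Fin n) (Fin n) ℝ) (hR : ∀ p, (R p).transpose = R p)
    (M : Matrix (Fin m) (Fin n) ℝ)
    (J : Matrix (Fin m) (Fin m) ℝ)
    (Φ : Fin n → Matrix (Fin n) (Fin n) ℝ)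
    (hΦdef : ∀ k j ℓ, Φ k j ℓ = ∑ p, ∑ s, J p s * R p j k * M s ℓ)
    (hΦsymm : ∀ k, (Φ k).transpose = Φ k)
    (Δ : A)
    (hΔ : Δ = ∑ j, ∑ k, ∑ ℓ, (Φ k j ℓ : ℂ) • (X j * X k * X ℓ)) :
    ∀ ℓ, Complex.I • (Δ * X ℓ - X ℓ * Δ) =
      (3 : ℂ) • ∑ a, ∑ k, ∑ b, ((Θ ℓ a * Φ k a b : ℝ) : ℂ) • (X k * X b) := by
  intro ℓ
  have hX : ∀ p, X p * X ℓ - X ℓ * X p = (-(Complex.I * Θ ℓ p)) • (1 : A) := by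
    intro p
    rw [← neg_sub, hccr, smul_smul, neg_smul]
  have hΦ₁₂ : ∀ j k l, Φ k j l = Φ j k l := by
    intro j k l
    have hRsymm : ∀ p, R p j k = R p k j := fun p => Matrix.IsSymm.apply (hR p) k j
    simp only [hΦdef, hRsymm]
  have hΦ₁₃ : ∀ j k l, Φ k j l = Φ k l j := fun j k l => Matrix.IsSymm.apply (hΦsymm k) l j
  rw [hΔ, sum_symmetric_cubic_mul_sub (T := fun j k l => (Φ k j l : ℂ)) hX
    (fun j k l => congrArg _ (hΦ₁₂ j k l)) (fun j k l => congrArg _ (hΦ₁₃ j k l)),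
    smul_comm]
  simp only [smul_sum, smul_smul]
  refine sum_congr rfl fun a _ => sum_congr rfl fun k _ => sum_congr rfl fun b _ => ?_
  congr 1
  push_cast
  linear_combination (-3 * (Θ ℓ a : ℂ) * Φ k a b) * Complex.I_sq

theorem cubic_hamiltonian_commutator {A : Type*} [Ring A] [Algebra ℂ A]
    {n m : ℕ} (X : Fin n → A) (Θ : Matrix (Fin n) (Fin n) ℝ)
    (hΘ : Θ.transpose = -Θ)
    (hccr : ∀ p q, X p * X q - X q * X p = Complex.I • ((Θ p q : ℂ) • (1 : A)))
    (R : Fin m → Matrix (Fin n) (Fin n) ℝ) (hR : ∀ p, (R p).transpose = R p)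
    (M : Matrix (Fin m) (Fin n) ℝ)
    (J : Matrix (Fin m) (Fin m) ℝ) (hJ : J.transpose = -J)
    (Φ : Fin n → Matrix (Fin n) (Fin n) ℝ)
    (hΦdef : ∀ k j ℓ, Φ k j ℓ = ∑ p, ∑ s, J p s * R p j k * M s ℓ)
    (hΦsymm : ∀ k, (Φ k).transpose = Φ k)
    (Δ : A)
    (hΔ : Δ = ∑ j, ∑ k, ∑ ℓ, (Φ k j ℓ : ℂ) • (X j * X k * X ℓ)) :
    ∀ ℓ, Complex.I • (Δ * X ℓ - X ℓ * Δ) =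
      (3 : ℂ) • ∑ a, ∑ k, ∑ b, ((Θ ℓ a * Φ k a b : ℝ) : ℂ) • (X k * X b) :=
  cubic_hamiltonian_commutator_general X Θ hccr R hR M J Φ hΦdef hΦsymm Δ hΔ
end
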